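/- Let Γ ⊂ ℝ² be a closed curve satisfying the self-shrinker equation k = -⟨F, ν⟩ with inner unit normal ν and curvature k > 0. Then the quantity k·e^{-|F|²/2} is constant along Γ. -/

import Mathlib

open scoped BigOperators
noncomputable section

/-- the euclidean inner product on `ℝⁿ` -/
def dot {n : ℕ} (v w : EuclideanSpace ℝ (Fin n)) : ℝ := inner ℝ v w

/-- Abstract data of an immersed `m`-dimensional submanifold `F : M → ℝⁿ` together with
the standard operators of submanifold geometry: the induced metric `g` and its inverse,
the (normal-bundle valued) second fundamental form `A`, covariant derivatives of scalar
functions, 1-forms and 2-tensors, the Laplace–Beltrami operator, the normal connection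
`∇^⊥` and normal Laplacians, and the Riemann curvature tensor, subject to the standard
structure equations (symmetries, Gauss and Codazzi equations, normality of `A`). -/
structure Submanifold (m n : ℕ) (M : Type) where
  F : M → EuclideanSpace ℝ (Fin n)
  /-- the tangent frame `F_i = ∂F/∂x^i` -/
  dF : M → Fin m → EuclideanSpace ℝ (Fin n)
  g : M → Fin m → Fin m → ℝ
  ginv : M → Fin m → Fin m → ℝ
  /-- the second fundamental form `A_ij` (normal-bundle valued) -/
  A : M → Fin m → Fin m → EuclideanSpace ℝ (Fin n)
  /-- covariant derivative (gradient, with lowered index) of scalar functions -/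
  grad : (M → ℝ) → M → Fin m → ℝ
  /-- covariant derivative `∇_i ω_j` of 1-forms -/
  cov1 : (M → Fin m → ℝ) → M → Fin m → Fin m → ℝ
  /-- covariant derivative `∇_i T_jk` of 2-tensors -/
  covT : (M → Fin m → Fin m → ℝ) → M → Fin m → Fin m → Fin m → ℝ
  /-- Laplace–Beltrami operator on functions -/
  lap : (M → ℝ) → M → ℝ
  /-- normal connection `∇^⊥_i V` on normal vector fields -/
  Dperp : (M → EuclideanSpace ℝ (Fin n)) → M → Fin m → EuclideanSpace ℝ (Fin n)
  /-- normal covariant derivative `∇^⊥_i T_jk` of normal-valued 2-tensors -/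
  DperpT : (M → Fin m → Fin m → EuclideanSpace ℝ (Fin n)) →
    M → Fin m → Fin m → Fin m → EuclideanSpace ℝ (Fin n)
  /-- Laplacian `Δ^⊥` on the normal bundle -/
  lapPerp : (M → EuclideanSpace ℝ (Fin n)) → M → EuclideanSpace ℝ (Fin n)
  lapPerpT : (M → Fin m → Fin m → EuclideanSpace ℝ (Fin n)) →
    M → Fin m → Fin m → EuclideanSpace ℝ (Fin n)
  /-- the Riemann curvature tensor of the induced metric -/
  Riem : M → Fin m → Fin m → Fin m → Fin m → ℝ
  /-- the pointwise norm `|(∇^⊥)^k A|` of the k-th iterated covariant derivative of `A` -/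
  normDkA : ℕ → M → ℝ
  g_symm : ∀ x i j, g x i j = g x j i
  g_def : ∀ x i j, g x i j = (dot (dF x i)  (dF x j))
  ginv_symm : ∀ x i j, ginv x i j = ginv x j i
  ginv_mul_g : ∀ x i j, ∑ k, ginv x i k * g x k j = if i = j then (1:ℝ) else 0
  A_symm : ∀ x i j, A x i j = A x j i
  /-- `A` is normal valued -/
  A_normal : ∀ x i j k, (dot (dF x k)  (A x i j)) = 0
  grad_normF_sq : ∀ x i, grad (fun y => ‖F y‖ ^ 2) x i = 2 * (dot (F x)  (dF x i))
  codazzi : ∀ x i j k, DperpT A x i j k = DperpT A x j i k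
  gauss : ∀ x i j k l,
    Riem x i j k l = (dot (A x i k)  (A x j l)) - (dot (A x i l)  (A x j k))
  normDkA_zero : ∀ x, (normDkA 0 x) ^ 2 =
    ∑ i, ∑ i', ∑ j, ∑ j', ginv x i i' * ginv x j j' * (dot (A x i j)  (A x i' j'))
  normDkA_one : ∀ x, (normDkA 1 x) ^ 2 =
    ∑ i, ∑ i', ∑ j, ∑ j', ∑ k, ∑ k',
      ginv x i i' * ginv x j j' * ginv x k k' * (dot (DperpT A x i j k)  (DperpT A x i' j' k'))

namespace Submanifold

variable {m n : ℕ} {M : Type} (X : Submanifold m n M)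

/-- the mean curvature vector `H = g^{ij} A_ij` -/
def H (x : M) : EuclideanSpace ℝ (Fin n) := ∑ i, ∑ j, X.ginv x i j • X.A x i j

/-- the 1-form `θ = (1/2) d|F|²`, i.e. `θ_i = ⟨F, F_i⟩` -/
def θ (x : M) (i : Fin m) : ℝ := (dot (X.F x)  (X.dF x i))

/-- `θ` with raised index -/
def θup (x : M) (k : Fin m) : ℝ := ∑ i, X.ginv x k i * X.θ x i

/-- tangential projection `F^⊤` of the position vector -/
def Ftan (x : M) : EuclideanSpace ℝ (Fin n) := ∑ i, X.θup x i • X.dF x i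

/-- normal projection `F^⊥` of the position vector -/
def Fperp (x : M) : EuclideanSpace ℝ (Fin n) := X.F x - X.Ftan x

/-- the self-shrinker equation `H = -F^⊥` -/
def IsShrinker : Prop := ∀ x, X.H x = - X.Fperp x

/-- `P_ij = ⟨H, A_ij⟩` -/
def P (x : M) (i j : Fin m) : ℝ := (dot (X.H x)  (X.A x i j))

/-- `P_i^j` -/
def Pmix (x : M) (i j : Fin m) : ℝ := ∑ k, X.ginv x j k * X.P x i k

/-- `P^{ij}` -/
def Pup (x : M) (i j : Fin m) : ℝ :=
  ∑ k, ∑ l, X.ginv x i k * X.ginv x j l * X.P x k l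

/-- `Q_ij = ⟨A_i^k, A_kj⟩` -/
def Q (x : M) (i j : Fin m) : ℝ :=
  ∑ k, ∑ l, X.ginv x k l * (dot (X.A x i k)  (X.A x l j))

/-- `Q_i^j` -/
def Qmix (x : M) (i j : Fin m) : ℝ := ∑ k, X.ginv x j k * X.Q x i k

/-- `Q^{ij}` -/
def Qup (x : M) (i j : Fin m) : ℝ :=
  ∑ k, ∑ l, X.ginv x i k * X.ginv x j l * X.Q x k l

/-- `S_ijkl = ⟨A_ij, A_kl⟩` -/
def S (x : M) (i j k l : Fin m) : ℝ := (dot (X.A x i j)  (X.A x k l))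

/-- `A^{ij}` -/
def Aup (x : M) (i j : Fin m) : EuclideanSpace ℝ (Fin n) :=
  ∑ k, ∑ l, (X.ginv x i k * X.ginv x j l) • X.A x k l

/-- the principal normal `ν = H/|H|` -/
def nu (x : M) : EuclideanSpace ℝ (Fin n) := ‖X.H x‖⁻¹ • X.H x

/-- `∇^⊥ ν = 0` -/
def ParallelPrincipalNormal : Prop := ∀ x i, X.Dperp X.nu x i = 0

/-- squared norm of a 1-form -/
def normSq1 (ω : M → Fin m → ℝ) (x : M) : ℝ :=
  ∑ i, ∑ j, X.ginv x i j * ω x i * ω x j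

/-- inner product of two 1-forms -/
def inner1 (ω η : M → Fin m → ℝ) (x : M) : ℝ :=
  ∑ i, ∑ j, X.ginv x i j * ω x i * η x j

/-- squared norm of a scalar 2-tensor -/
def normSq2 (T : M → Fin m → Fin m → ℝ) (x : M) : ℝ :=
  ∑ i, ∑ j, ∑ k, ∑ l, X.ginv x i k * X.ginv x j l * T x i j * T x k l

/-- squared norm of a scalar 3-tensor -/
def normSq3 (T : M → Fin m → Fin m → Fin m → ℝ) (x : M) : ℝ :=
  ∑ i, ∑ i', ∑ j, ∑ j', ∑ k, ∑ k',
    X.ginv x i i' * X.ginv x j j' * X.ginv x k k' * T x i j k * T x i' j' k'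

/-- squared norm of a scalar 4-tensor -/
def normSq4 (T : M → Fin m → Fin m → Fin m → Fin m → ℝ) (x : M) : ℝ :=
  ∑ i, ∑ i', ∑ j, ∑ j', ∑ k, ∑ k', ∑ l, ∑ l',
    X.ginv x i i' * X.ginv x j j' * X.ginv x k k' * X.ginv x l l' *
      T x i j k l * T x i' j' k' l'

/-- squared norm of a normal-valued 1-tensor -/
def normSqPerp1 (V : M → Fin m → EuclideanSpace ℝ (Fin n)) (x : M) : ℝ :=
  ∑ i, ∑ j, X.ginv x i j * (dot (V x i)  (V x j))

/-- squared norm of a normal-valued 2-tensor -/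
def normSqPerp2 (T : M → Fin m → Fin m → EuclideanSpace ℝ (Fin n)) (x : M) : ℝ :=
  ∑ i, ∑ i', ∑ j, ∑ j', X.ginv x i i' * X.ginv x j j' * (dot (T x i j)  (T x i' j'))

/-- squared norm of a normal-valued 3-tensor -/
def normSqPerp3 (T : M → Fin m → Fin m → Fin m → EuclideanSpace ℝ (Fin n)) (x : M) : ℝ :=
  ∑ i, ∑ i', ∑ j, ∑ j', ∑ k, ∑ k',
    X.ginv x i i' * X.ginv x j j' * X.ginv x k k' * (dot (T x i j k)  (T x i' j' k'))

/-- components of the normal curvature `R^⊥_ij = A_ik ∧ A^k_j` -/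
def Rperp (x : M) (i j : Fin m) (a b : Fin n) : ℝ :=
  ∑ k, ∑ l, X.ginv x k l * (X.A x i k a * X.A x l j b - X.A x i k b * X.A x l j a)

/-- squared norm `|R^⊥|²` of the normal curvature -/
def normSqRperp (x : M) : ℝ :=
  ∑ i, ∑ i', ∑ j, ∑ j', X.ginv x i i' * X.ginv x j j' *
    ∑ a, ∑ b, X.Rperp x i j a b * X.Rperp x i' j' a b

end Submanifold

open scoped RealInnerProductSpace

lemma decomp2 (e₁ e₂ v : EuclideanSpace ℝ (Fin 2)) (h1 : ‖e₁‖ = 1) (h2 : ‖e₂‖ = 1)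
    (h12 : ⟪e₁, e₂⟫ = 0) : v = ⟪e₁, v⟫ • e₁ + ⟪e₂, v⟫ • e₂ := by
  have hon : Orthonormal ℝ ![e₁, e₂] := by
    rw [orthonormal_iff_ite]
    intro i j
    fin_cases i <;> fin_cases j
    · show (⟪e₁, e₁⟫ : ℝ) = if True then 1 else 0
      rw [real_inner_self_eq_norm_sq, h1]; norm_num
    · show (⟪e₁, e₂⟫ : ℝ) = _
      rw [h12]; norm_num
    · show (⟪e₂, e₁⟫ : ℝ) = _
      rw [real_inner_comm, h12]; norm_num
    · show (⟪e₂, e₂⟫ : ℝ) = if True then 1 else 0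
      rw [real_inner_self_eq_norm_sq, h2]; norm_num
  have hcard : Fintype.card (Fin 2) = Module.finrank ℝ (EuclideanSpace ℝ (Fin 2)) := by simp
  let b : Module.Basis (Fin 2) ℝ _ := basisOfOrthonormalOfCardEqFinrank hon hcard
  have hb : ⇑b = ![e₁, e₂] := coe_basisOfOrthonormalOfCardEqFinrank hon hcard
  have hon' : Orthonormal ℝ (⇑b) := hb ▸ hon
  let ob : OrthonormalBasis (Fin 2) ℝ _ := b.toOrthonormalBasis hon'
  have hob : ∀ i, ob i = ![e₁, e₂] i := by
    intro i; rw [show ob i = b i from congrFun (b.coe_toOrthonormalBasis hon') i, hb]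
  have := ob.sum_repr' v
  rw [Fin.sum_univ_two, hob 0, hob 1] at this
  simpa using this.symm

/-- for a closed planar self-shrinking curve (`k = -⟨F, ν⟩`, `k > 0`,
`ν` the inner unit normal), the quantity `k·exp(-|F|²/2)` is constant along the curve. -/
theorem abreschLanger_first_integral
    (γ ν : ℝ → EuclideanSpace ℝ (Fin 2)) (k : ℝ → ℝ)
    (hγ : ContDiff ℝ (⊤ : ℕ∞) γ) (hν : ContDiff ℝ (⊤ : ℕ∞) ν) (hk : ContDiff ℝ (⊤ : ℕ∞) k)
    (hunit : ∀ s, ‖deriv γ s‖ = 1)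
    (hνunit : ∀ s, ‖ν s‖ = 1)
    (hνperp : ∀ s, dot (ν s) (deriv γ s) = 0)
    (hcurv : ∀ s, deriv (deriv γ) s = k s • ν s)
    (hshr : ∀ s, k s = - dot (γ s) (ν s))
    (hkpos : ∀ s, 0 < k s)
    (hclosed : ∃ L > 0, Function.Periodic γ L) :
    ∀ s t, k s * Real.exp (-‖γ s‖ ^ 2 / 2) = k t * Real.exp (-‖γ t‖ ^ 2 / 2) := by
  have key : ∀ x : ℝ, HasDerivAt (fun s => k s * Real.exp (-‖γ s‖ ^ 2 / 2)) 0 x := by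
    intro x
    have hγd : Differentiable ℝ γ := hγ.differentiable (by simp)
    have hginf : ContDiff ℝ ((⊤ : ℕ∞) : WithTop ℕ∞) γ := hγ.of_le (by simp)
    have hγ2 : Differentiable ℝ (deriv γ) :=
      ((contDiff_infty_iff_deriv.mp hginf).2).differentiable (by simp)
    have hνd : Differentiable ℝ ν := hν.differentiable (by simp)
    have hγ' : HasDerivAt γ (deriv γ x) x := (hγd x).hasDerivAt
    have hT' : HasDerivAt (deriv γ) (k x • ν x) x := hcurv x ▸ (hγ2 x).hasDerivAt
    have hν' : HasDerivAt ν (deriv ν x) x := (hνd x).hasDerivAt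
    have hp : ∀ s, ⟪ν s, deriv γ s⟫ = (0:ℝ) := hνperp
    have ha : ⟪ν x, deriv ν x⟫ = (0:ℝ) := by
      have d1 : HasDerivAt (fun s => (⟪ν s, ν s⟫ : ℝ))
          (⟪ν x, deriv ν x⟫ + ⟪deriv ν x, ν x⟫) x := hν'.inner ℝ hν'
      have e1 : (fun s => (⟪ν s, ν s⟫ : ℝ)) = fun _ => (1:ℝ) := by
        funext s; rw [real_inner_self_eq_norm_sq, hνunit]; norm_num
      rw [e1] at d1
      have h0 := d1.unique (hasDerivAt_const x 1)
      rw [real_inner_comm] at h0 ⊢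
      linarith
    have hb : ⟪deriv γ x, deriv ν x⟫ = -k x := by
      have d2 : HasDerivAt (fun s => (⟪ν s, deriv γ s⟫ : ℝ))
          (⟪ν x, k x • ν x⟫ + ⟪deriv ν x, deriv γ x⟫) x := hν'.inner ℝ hT'
      have e2 : (fun s => (⟪ν s, deriv γ s⟫ : ℝ)) = fun _ => (0:ℝ) := funext hp
      rw [e2] at d2
      have h0 := d2.unique (hasDerivAt_const x 0)
      have hsmul : (⟪ν x, k x • ν x⟫ : ℝ) = k x := by
        rw [real_inner_smul_right, real_inner_self_eq_norm_sq, hνunit]; ring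
      rw [hsmul] at h0
      rw [real_inner_comm]
      linarith
    have hperp : ⟪deriv γ x, ν x⟫ = (0:ℝ) := by rw [real_inner_comm]; exact hp x
    have hdec : deriv ν x = (-k x) • deriv γ x := by
      have hd := decomp2 (deriv γ x) (ν x) (deriv ν x) (hunit x) (hνunit x) hperp
      rw [hb, ha] at hd
      simpa using hd
    have hk' : HasDerivAt k (k x * ⟪γ x, deriv γ x⟫) x := by
      have hkdef : k = fun s => -(⟪γ s, ν s⟫ : ℝ) := funext fun s => by rw [hshr s]; rfl
      have d3 : HasDerivAt (fun s => -(⟪γ s, ν s⟫ : ℝ))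
          (-(⟪γ x, deriv ν x⟫ + ⟪deriv γ x, ν x⟫)) x := (hγ'.inner ℝ hν').neg
      rw [hperp, hdec, real_inner_smul_right] at d3
      have hkx : (⟪γ x, ν x⟫ : ℝ) = -k x := by
        have hd : dot (γ x) (ν x) = (⟪γ x, ν x⟫ : ℝ) := rfl
        have h2 := hshr x; linarith
      rw [hkdef]
      convert d3 using 1
      beta_reduce
      rw [hkx]; ring
    have hr : HasDerivAt (fun s => -‖γ s‖ ^ 2 / 2) (-⟪γ x, deriv γ x⟫) x := by
      have d4 : HasDerivAt (fun s => (⟪γ s, γ s⟫ : ℝ))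
          (⟪γ x, deriv γ x⟫ + ⟪deriv γ x, γ x⟫) x := hγ'.inner ℝ hγ'
      have e4 : (fun s => -‖γ s‖ ^ 2 / 2) = fun s => -(⟪γ s, γ s⟫ : ℝ) / 2 := by
        funext s; rw [real_inner_self_eq_norm_sq]
      rw [e4]
      have d5 := (d4.neg).div_const 2
      exact d5.congr_deriv (by rw [real_inner_comm (deriv γ x) (γ x)]; ring)
    have hE : HasDerivAt (fun s => Real.exp (-‖γ s‖ ^ 2 / 2))
        (Real.exp (-‖γ x‖ ^ 2 / 2) * (-⟪γ x, deriv γ x⟫)) x := hr.exp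
    have hmul := hk'.mul hE
    exact hmul.congr_deriv (by ring)
  intro s t
  exact is_const_of_deriv_eq_zero (fun x => (key x).differentiableAt)
    (fun x => (key x).deriv) s t
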